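/- (Lemma 1 of the paper.) Let DB be an uncertain database all of whose existential probabilities are nonnegative. Then for every nonempty pattern α, expSup(α) ≤ expSup^cap(α); that is, the upper bound expSup^cap of a pattern is always greater than or equal to its actual expected support. -/

import Mathlib

/-!
Split an occurrence of `β ++ γ` in `S` as `o₁ ++ o₂`. Greedy matching of `β` ends no later
than `o₁`, so `o₂` is an occurrence of `γ` in `S|β`; likewise the `k`-th entry of `o₁` lies in
`S|β.take k`, hence is bounded by the `k`-th factor `P̂` of `maxPr(β)`. Therefore
`maxPr_S(β ++ γ) ≤ maxPr(β) · maxPr_{S|β}(γ)`, and summing over `DB` with `γ = [i_m]` gives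
`expSup(α) ≤ expSup^cap(α)`.
-/

variable {I : Type*}

/-- An uncertain sequence: a finite list of (item, existential probability) pairs. -/
abbrev USeq (I : Type*) := List (I × ℝ)

/-- An uncertain database: a finite list of uncertain sequences. -/
abbrev UDB (I : Type*) := List (USeq I)

/-- `α` occurs in `S`: some sublist of `S` has item list `α`. -/
def Occurs (α : List I) (S : USeq I) : Prop :=
  ∃ o : USeq I, o.Sublist S ∧ o.map Prod.fst = α

/-- Maximum occurrence probability of pattern `α` in `S`
(`0` if `α` has no occurrence in `S`; `1` for the empty pattern). -/
noncomputable def maxPrS [DecidableEq I] (α : List I) (S : USeq I) : ℝ :=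
  WithBot.unbotD 0 (((S.sublists.filter fun o => decide (o.map Prod.fst = α)).map
      fun o => (o.map Prod.snd).prod).maximum)

/-- Greedy projection: `projSeq α S = some S'` iff `α` occurs in `S`, in which case `S'`
is the suffix of `S` strictly after the last matched position of the greedy (leftmost)
occurrence of `α` in `S`.  For the empty pattern it is `S` itself. -/
def projSeq [DecidableEq I] : List I → USeq I → Option (USeq I)
  | [], S => some S
  | _ :: _, [] => none
  | i :: α, (x, _) :: rest =>
      if x = i then projSeq α rest else projSeq (i :: α) rest

/-- The projected database `DB|α`. -/
def projDB [DecidableEq I] (α : List I) (DB : UDB I) : UDB I :=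
  DB.filterMap (projSeq α)

/-- `P̂_D(i)`: maximum probability of an entry with item `i` over all sequences of `D`
(`0` if `i` occurs in no sequence of `D`). -/
noncomputable def Phat [DecidableEq I] (D : UDB I) (i : I) : ℝ :=
  WithBot.unbotD 0 (((D.flatten.filter fun e => decide (e.1 = i)).map Prod.snd).maximum)

/-- `maxPr(α)` relative to `DB`: the product of per-step maximum probabilities over the
successively projected databases. -/
noncomputable def maxPrDB [DecidableEq I] (DB : UDB I) (α : List I) : ℝ :=
  ∏ k : Fin α.length, Phat (projDB (α.take k.val) DB) (α.get k)

/-- Expected support of `α` in `DB`. -/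
noncomputable def expSup [DecidableEq I] (DB : UDB I) (α : List I) : ℝ :=
  (DB.map fun S => maxPrS α S).sum

/-- `expSup^cap` of a nonempty pattern (junk value `0` on the empty pattern). -/
noncomputable def expSupCap [DecidableEq I] (DB : UDB I) (α : List I) : ℝ :=
  match α.getLast? with
  | none => 0
  | some i =>
      maxPrDB DB α.dropLast *
        ((projDB α.dropLast DB).map fun S' => maxPrS [i] S').sum

/-- Number of sequences of `D` in which item `i` occurs. -/
def supCount [DecidableEq I] (D : UDB I) (i : I) : ℕ :=
  (D.filter fun S => decide (i ∈ S.map Prod.fst)).length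

/-- `expSupport^top` of a nonempty pattern (junk value `0` on the empty pattern). -/
noncomputable def expSupTop [DecidableEq I] (DB : UDB I) (α : List I) : ℝ :=
  match α.getLast? with
  | none => 0
  | some i =>
      maxPrDB DB α.dropLast * Phat (projDB α.dropLast DB) i *
        (supCount (projDB α.dropLast DB) i : ℝ)

/-- Item `i` occurs in some sequence of `D`. -/
def ItemOccursIn (D : UDB I) (i : I) : Prop :=
  ∃ S ∈ D, i ∈ S.map Prod.fst

/-- `sWeight`: average weight of the items of a pattern. -/
noncomputable def sWeight (w : I → ℝ) (α : List I) : ℝ :=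
  (α.map w).sum / (α.length : ℝ)

/-- Maximum weight among the items of a pattern (`0` for the empty pattern). -/
noncomputable def mxWs (w : I → ℝ) (α : List I) : ℝ :=
  WithBot.unbotD 0 ((α.map w).maximum)

/-- Maximum weight among items occurring in some sequence of `D` (`0` if none). -/
noncomputable def mxWDB (w : I → ℝ) (D : UDB I) : ℝ :=
  WithBot.unbotD 0 ((D.flatten.map fun e => w e.1).maximum)

/-- `wgt^cap`. -/
noncomputable def wgtCap [DecidableEq I] (DB : UDB I) (w : I → ℝ) (α : List I) : ℝ :=
  max (mxWDB w (projDB α.dropLast DB)) (mxWs w α)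

/-- Weighted expected support. -/
noncomputable def WES [DecidableEq I] (DB : UDB I) (w : I → ℝ) (α : List I) : ℝ :=
  expSup DB α * sWeight w α

/-- `wExpSup^cap`. -/
noncomputable def wExpSupCap [DecidableEq I] (DB : UDB I) (w : I → ℝ) (α : List I) : ℝ :=
  expSupCap DB α * wgtCap DB w α

namespace List

section

variable {α : Type*} [LinearOrder α] {l : List α} {d : α}

lemma le_unbotD_maximum {a : α} (h : a ∈ l) : a ≤ l.maximum.unbotD d :=
  WithBot.le_unbotD (le_maximum_of_mem' h)

lemma unbotD_maximum_le {x : α} (hd : d ≤ x) (h : ∀ a ∈ l, a ≤ x) : l.maximum.unbotD d ≤ x :=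
  (WithBot.unbotD_le_iff fun _ => hd).2 (maximum_le_of_forall_le fun a ha => by simpa using h a ha)

lemma le_unbotD_maximum_of_forall_le (h : ∀ a ∈ l, d ≤ a) : d ≤ l.maximum.unbotD d := by
  cases hm : l.maximum with
  | bot => simp
  | coe m => simpa using h m (maximum_mem hm)

end

lemma sum_map_filterMap {α β M : Type*} [AddCommMonoid M] (p : α → Option β) (f : β → M)
    (l : List α) :
    ((l.filterMap p).map f).sum = (l.map fun a => ((p a).map f).getD 0).sum := by
  induction l with
  | nil => simp
  | cons a t ih => cases hp : p a <;> simp [hp, ih]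

end List

lemma prod_snd_nonneg {o : USeq I} (h : ∀ e ∈ o, 0 ≤ e.2) : 0 ≤ (o.map Prod.snd).prod :=
  List.prod_nonneg fun _ hp => by
    obtain ⟨e, he, rfl⟩ := List.mem_map.1 hp
    exact h e he

section

variable [DecidableEq I]

lemma prod_snd_le_maxPrS {o S : USeq I} (ho : o.Sublist S) :
    (o.map Prod.snd).prod ≤ maxPrS (o.map Prod.fst) S :=
  List.le_unbotD_maximum (by simpa using ⟨o, ⟨ho, rfl⟩, rfl⟩)

lemma maxPrS_le {S : USeq I} {α : List I} {x : ℝ} (h0 : 0 ≤ x)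
    (h : ∀ o : USeq I, o.Sublist S → o.map Prod.fst = α → (o.map Prod.snd).prod ≤ x) :
    maxPrS α S ≤ x := by
  refine List.unbotD_maximum_le h0 fun a ha => ?_
  simp only [List.mem_map, List.mem_filter, List.mem_sublists, decide_eq_true_eq] at ha
  obtain ⟨o, ⟨ho, hα⟩, rfl⟩ := ha
  exact h o ho hα

lemma maxPrS_nonneg {S : USeq I} (α : List I) (hS : ∀ e ∈ S, 0 ≤ e.2) : 0 ≤ maxPrS α S := by
  refine List.le_unbotD_maximum_of_forall_le fun a ha => ?_
  simp only [List.mem_map, List.mem_filter, List.mem_sublists] at ha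
  obtain ⟨o, ⟨ho, -⟩, rfl⟩ := ha
  exact prod_snd_nonneg fun e he => hS e (ho.subset he)

lemma le_Phat {D : UDB I} {S : USeq I} {e : I × ℝ} (hS : S ∈ D) (he : e ∈ S) :
    e.2 ≤ Phat D e.1 :=
  List.le_unbotD_maximum (by simpa using ⟨S, hS, he⟩)

lemma Phat_nonneg {D : UDB I} (hD : ∀ S ∈ D, ∀ e ∈ S, 0 ≤ e.2) (i : I) : 0 ≤ Phat D i := by
  refine List.le_unbotD_maximum_of_forall_le fun a ha => ?_
  simp only [List.mem_map, List.mem_filter, List.mem_flatten] at ha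
  obtain ⟨e, ⟨⟨S, hS, he⟩, -⟩, rfl⟩ := ha
  exact hD S hS e he

lemma projSeq_suffix {β : List I} {S S' : USeq I} (h : projSeq β S = some S') : S' <:+ S := by
  induction S generalizing β with
  | nil =>
    cases β with
    | nil => cases h; exact List.suffix_rfl
    | cons i γ => simp [projSeq] at h
  | cons e rest ih =>
    cases β with
    | nil => cases h; exact List.suffix_rfl
    | cons i γ =>
      unfold projSeq at h
      split_ifs at h <;> exact (ih h).trans (List.suffix_cons _ _)

lemma projSeq_cons (i : I) (β : List I) (S : USeq I) :
    projSeq (i :: β) S = (projSeq [i] S).bind (projSeq β) := by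
  induction S with
  | nil => rfl
  | cons e rest ih =>
    obtain ⟨x, p⟩ := e
    by_cases hx : x = i <;> simp [projSeq, hx, ih]

lemma projSeq_singleton_of_cons_sublist {e : I × ℝ} {o S : USeq I} (h : (e :: o).Sublist S) :
    ∃ S', projSeq [e.1] S = some S' ∧ o.Sublist S' := by
  induction S with
  | nil => simp at h
  | cons x rest ih =>
    by_cases hx : x.1 = e.1
    · refine ⟨rest, by simp [projSeq, hx], ?_⟩
      cases h with
      | cons _ h => exact List.sublist_of_cons_sublist h
      | cons_cons _ h => exact h
    · cases h with
      | cons _ h => simpa [projSeq, hx] using ih h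
      | cons_cons _ h => exact absurd rfl hx

lemma exists_projSeq_of_append_sublist {o₁ o₂ S : USeq I} (h : (o₁ ++ o₂).Sublist S) :
    ∃ S', projSeq (o₁.map Prod.fst) S = some S' ∧ o₂.Sublist S' := by
  induction o₁ generalizing S with
  | nil => exact ⟨S, by simp [projSeq], h⟩
  | cons e o₁ ih =>
    obtain ⟨U, hU, hsub⟩ := projSeq_singleton_of_cons_sublist h
    obtain ⟨S', hS', ho₂⟩ := ih hsub
    exact ⟨S', by rw [List.map_cons, projSeq_cons, hU]; exact hS', ho₂⟩

lemma projDB_nonneg {DB : UDB I} (hp : ∀ S ∈ DB, ∀ e ∈ S, 0 ≤ e.2) (β : List I) :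
    ∀ S' ∈ projDB β DB, ∀ e ∈ S', 0 ≤ e.2 := by
  intro S' hS' e he
  obtain ⟨S, hS, hproj⟩ := List.mem_filterMap.1 hS'
  exact hp S hS e ((projSeq_suffix hproj).sublist.subset he)

lemma maxPrDB_nonneg {DB : UDB I} (hp : ∀ S ∈ DB, ∀ e ∈ S, 0 ≤ e.2) (β : List I) :
    0 ≤ maxPrDB DB β :=
  Finset.prod_nonneg fun _ _ => Phat_nonneg (projDB_nonneg hp _) _

lemma getElem_snd_le_Phat_projDB {DB : UDB I} {S o : USeq I} (hS : S ∈ DB) (ho : o.Sublist S)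
    {k : ℕ} (hk : k < o.length) :
    o[k].2 ≤ Phat (projDB ((o.map Prod.fst).take k) DB) o[k].1 := by
  have hsplit : o = o.take k ++ o[k] :: o.drop (k + 1) := by
    rw [← List.drop_eq_getElem_cons hk, List.take_append_drop]
  rw [hsplit] at ho
  obtain ⟨S', hS', hsub⟩ := exists_projSeq_of_append_sublist ho
  rw [List.map_take] at hS'
  exact le_Phat (List.mem_filterMap.2 ⟨S, hS, hS'⟩) (hsub.subset List.mem_cons_self)

lemma prod_snd_le_maxPrDB {DB : UDB I} (hp : ∀ S ∈ DB, ∀ e ∈ S, 0 ≤ e.2) {S o : USeq I}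
    (hS : S ∈ DB) (ho : o.Sublist S) :
    (o.map Prod.snd).prod ≤ maxPrDB DB (o.map Prod.fst) := by
  calc (o.map Prod.snd).prod = ∏ k : Fin (o.map Prod.fst).length, o[k.1].2 := by
        rw [← Fin.prod_univ_getElem]
        exact Fintype.prod_equiv (finCongr (by simp)) _ _ (by simp)
    _ ≤ maxPrDB DB (o.map Prod.fst) := by
        refine Finset.prod_le_prod (fun k _ => hp S hS _ (ho.subset (List.getElem_mem _)))
          fun k _ => ?_
        simpa using getElem_snd_le_Phat_projDB hS ho (by simpa using k.2)

lemma maxPrS_append_le {DB : UDB I} (hp : ∀ S ∈ DB, ∀ e ∈ S, 0 ≤ e.2) {S : USeq I}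
    (hS : S ∈ DB) (β γ : List I) :
    maxPrS (β ++ γ) S ≤ maxPrDB DB β * ((projSeq β S).map (maxPrS γ)).getD 0 := by
  cases hproj : projSeq β S with
  | none =>
    rw [Option.map_none, Option.getD_none, mul_zero]
    refine maxPrS_le le_rfl fun o ho hmo => ?_
    obtain ⟨o₁, o₂, rfl, rfl, -⟩ := List.map_eq_append_iff.1 hmo
    obtain ⟨S', hS', -⟩ := exists_projSeq_of_append_sublist ho
    simp [hproj] at hS'
  | some S' =>
    have hS'nn : ∀ e ∈ S', 0 ≤ e.2 := fun e he =>
      hp S hS e ((projSeq_suffix hproj).sublist.subset he)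
    rw [Option.map_some, Option.getD_some]
    refine maxPrS_le (mul_nonneg (maxPrDB_nonneg hp β) (maxPrS_nonneg γ hS'nn))
      fun o ho hmo => ?_
    obtain ⟨o₁, o₂, rfl, rfl, rfl⟩ := List.map_eq_append_iff.1 hmo
    obtain ⟨S'', hS'', ho₂⟩ := exists_projSeq_of_append_sublist ho
    obtain rfl : S'' = S' := Option.some.inj (hS''.symm.trans hproj)
    rw [List.map_append, List.prod_append]
    exact mul_le_mul (prod_snd_le_maxPrDB hp hS ((List.sublist_append_left _ _).trans ho))
      (prod_snd_le_maxPrS ho₂) (prod_snd_nonneg fun e he => hS'nn e (ho₂.subset he))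
      (maxPrDB_nonneg hp _)

lemma expSup_append_le {DB : UDB I} (hp : ∀ S ∈ DB, ∀ e ∈ S, 0 ≤ e.2) (β γ : List I) :
    expSup DB (β ++ γ) ≤ maxPrDB DB β * ((projDB β DB).map (maxPrS γ)).sum := by
  rw [projDB, List.sum_map_filterMap, ← List.sum_map_mul_left]
  exact List.sum_le_sum fun S hS => maxPrS_append_le hp hS β γ

end

/-- Lemma 1: if all probabilities of `DB` are nonnegative, then for every nonempty
pattern `α`, `expSup(α) ≤ expSup^cap(α)`. -/
theorem expSup_le_expSupCap [DecidableEq I]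
    (DB : UDB I) (hp : ∀ S ∈ DB, ∀ e ∈ S, 0 ≤ e.2)
    (α : List I) (hα : α ≠ []) :
    expSup DB α ≤ expSupCap DB α := by
  rw [expSupCap, List.getLast?_eq_some_getLast hα]
  nth_rw 1 [← List.dropLast_append_getLast hα]
  exact expSup_append_le hp _ _
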